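/- The function V(r) = r·coth(r) − log(sinh(r)) − log 2 has the following asymptotic behaviour: (i) V(r) + log(r) → 1 − log 2 as r → 0⁺ (logarithmic divergence at the origin, i.e. V(r)/(−log r) → 1); and (ii) e^{2r} V(r)/(2r) → 1 as r → ∞ (exponential decay at infinity, V(r) ~ 2r e^{−2r}). -/

import Mathlib

open MeasureTheory Filter Set
open scoped ENNReal NNReal Topology

noncomputable section

/-- `IsP2 μ` : `μ` is a Borel probability measure on `ℝ` with finite second moment. -/
def IsP2 (μ : Measure ℝ) : Prop :=
  IsProbabilityMeasure μ ∧ Integrable (fun x => x ^ 2) μ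

/-- The space `P₂(ℝ)` of Borel probability measures on `ℝ` with finite second moment. -/
abbrev P2 : Type := {μ : Measure ℝ // IsP2 μ}

/-- `π` is a coupling of `μ` and `ν`. -/
def IsCoupling (π : Measure (ℝ × ℝ)) (μ ν : Measure ℝ) : Prop :=
  π.map Prod.fst = μ ∧ π.map Prod.snd = ν

/-- The Wasserstein-2 distance on `P₂(ℝ)`. -/
noncomputable def W2 (μ ν : P2) : ℝ :=
  Real.sqrt (ENNReal.toReal (sInf {c : ℝ≥0∞ | ∃ π : Measure (ℝ × ℝ),
    IsCoupling π μ.1 ν.1 ∧ c = ∫⁻ p, ENNReal.ofReal ((p.1 - p.2) ^ 2) ∂π}))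

/-- Narrow convergence of a sequence of measures: testing against bounded continuous
functions. -/
def NarrowTendsto (μs : ℕ → Measure ℝ) (μ : Measure ℝ) : Prop :=
  ∀ f : BoundedContinuousFunction ℝ ℝ,
    Tendsto (fun n => ∫ x, f x ∂(μs n)) atTop (𝓝 (∫ x, f x ∂μ))

/-- Upper Dini derivative (as an extended real number). -/
noncomputable def diniUpper (f : ℝ → ℝ) (t : ℝ) : EReal :=
  limsup (fun h : ℝ => (((f (t + h) - f t) / h : ℝ) : EReal)) (𝓝[>] (0 : ℝ))

/-- Local absolute continuity of a curve in `(P₂(ℝ), W₂)` on `(0, ∞)`. -/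
def LocACCurve (u : ℝ → P2) : Prop :=
  ∀ a b : ℝ, 0 < a → a ≤ b → ∃ m : ℝ → ℝ,
    IntegrableOn m (Icc a b) ∧
    ∀ s t : ℝ, a ≤ s → s ≤ t → t ≤ b → W2 (u s) (u t) ≤ ∫ r in Icc s t, m r

/-- The (effective) domain of a functional on `P₂(ℝ)` with values in `(-∞, ∞]`. -/
def EDom (φ : P2 → EReal) : Set P2 := {μ | φ μ ≠ ⊤}

/-- `u` is a solution of the evolution variational inequality (EVI) for the functional `φ`
with initial datum `u₀`:  it is a locally absolutely continuous curve with
`(1/2) d/dt W₂²(u_t, ν) ≤ φ(ν) − φ(u_t)` for all `t > 0` and all `ν ∈ Dom φ`, and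
`W₂(u_t, u₀) → 0` as `t ↓ 0`. -/
def IsEVISolution (φ : P2 → EReal) (u : ℝ → P2) (u₀ : P2) : Prop :=
  u 0 = u₀ ∧ LocACCurve u ∧
  (∀ t : ℝ, 0 < t → ∀ ν ∈ EDom φ,
    (((1 : ℝ)/2 : ℝ) : EReal) * diniUpper (fun s => (W2 (u s) ν) ^ 2) t ≤ φ ν - φ (u t)) ∧
  Tendsto (fun t => W2 (u t) u₀) (𝓝[>] (0 : ℝ)) (𝓝 0)

/-- A functional is proper if it is not identically `+∞`. -/
def ProperFn (φ : P2 → EReal) : Prop := ∃ μ : P2, φ μ ≠ ⊤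

/-- Bounded from below (in particular the value `-∞` is never attained). -/
def BddBelowFn (φ : P2 → EReal) : Prop := ∃ C : ℝ, ∀ μ : P2, (C : EReal) ≤ φ μ

/-- (Sequential) lower semicontinuity with respect to the Wasserstein-2 distance. -/
def W2LSC (φ : P2 → EReal) : Prop :=
  ∀ (μs : ℕ → P2) (μ : P2), Tendsto (fun n => W2 (μs n) μ) atTop (𝓝 0) →
    φ μ ≤ liminf (fun n => φ (μs n)) atTop

/-- (Sequential) lower semicontinuity with respect to narrow convergence. -/
def NarrowLSC (φ : P2 → EReal) : Prop :=
  ∀ (μs : ℕ → P2) (μ : P2), NarrowTendsto (fun n => (μs n).1) μ.1 →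
    φ μ ≤ liminf (fun n => φ (μs n)) atTop

/-- Geodesic convexity: convexity along every constant-speed `W₂`-geodesic. -/
def GeodConvex (φ : P2 → EReal) : Prop :=
  ∀ γ : ℝ → P2,
    (∀ s t : ℝ, s ∈ Icc (0:ℝ) 1 → t ∈ Icc (0:ℝ) 1 →
        W2 (γ s) (γ t) = |s - t| * W2 (γ 0) (γ 1)) →
    ∀ t : ℝ, t ∈ Icc (0:ℝ) 1 →
      φ (γ t) ≤ (((1 - t : ℝ)) : EReal) * φ (γ 0) + ((t : ℝ) : EReal) * φ (γ 1)

/-- Membership in the `W₂`-closure of a set of measures. -/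
def InW2Closure (S : Set P2) (μ : P2) : Prop :=
  ∃ νs : ℕ → P2, (∀ k, νs k ∈ S) ∧ Tendsto (fun k => W2 (νs k) μ) atTop (𝓝 0)

/-- The interaction potential `V(r) = r coth r − log(sinh r) − log 2`. -/
noncomputable def V (r : ℝ) : ℝ :=
  r * (Real.cosh r / Real.sinh r) - Real.log |Real.sinh r| - Real.log 2

/-! Near `0`, `V r + log r = cosh r / (sinh r / r) - log (sinh r / r) - log 2` with
`sinh r / r → 1`. Near `∞`, put `x = e^{-2r}`: then `V r = 2 r x / (1 - x) - log (1 - x)`, so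
`e^{2r} V r / (2r) = 1 / (1 - x) - (log (1 - x) / x) / (2r) → 1`, because
`log (1 - x) / x → -1`. Both elementary limits are derivatives at `0` read as difference
quotients. -/

theorem HasDerivAt.tendsto_div_self {𝕜 : Type*} [NontriviallyNormedField 𝕜] {f : 𝕜 → 𝕜}
    {f' : 𝕜} (hf : HasDerivAt f f' 0) (h0 : f 0 = 0) :
    Tendsto (fun x => f x / x) (𝓝[≠] 0) (𝓝 f') := by
  simpa [h0, div_eq_inv_mul] using hf.tendsto_slope_zero

namespace Real

theorem tendsto_sinh_div_self : Tendsto (fun x => sinh x / x) (𝓝[≠] 0) (𝓝 1) := by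
  simpa using (hasDerivAt_sinh 0).tendsto_div_self sinh_zero

theorem tendsto_log_one_sub_div_self :
    Tendsto (fun x => log (1 - x) / x) (𝓝[≠] 0) (𝓝 (-1)) := by
  have h := ((hasDerivAt_id (0 : ℝ)).const_sub 1).log (by norm_num)
  simpa using h.tendsto_div_self (by simp)

theorem sinh_eq_exp_mul_one_sub (x : ℝ) : sinh x = exp x * (1 - exp (-(2 * x))) / 2 := by
  rw [sinh_eq, mul_sub, ← exp_add]
  ring_nf

theorem cosh_eq_exp_mul_one_add (x : ℝ) : cosh x = exp x * (1 + exp (-(2 * x))) / 2 := by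
  rw [cosh_eq, mul_add, ← exp_add]
  ring_nf

theorem one_sub_exp_neg_pos {x : ℝ} (hx : 0 < x) : 0 < 1 - exp (-x) :=
  sub_pos.mpr (exp_lt_one_iff.mpr (neg_neg_of_pos hx))

end Real

open Real

theorem V_add_log_eq {r : ℝ} (hr : 0 < r) :
    V r + log r = cosh r / (sinh r / r) - log (sinh r / r) - log 2 := by
  have hs : 0 < sinh r := sinh_pos_iff.mpr hr
  rw [V, abs_of_pos hs, log_div hs.ne' hr.ne']
  field_simp
  ring

theorem V_eq_of_pos {r : ℝ} (hr : 0 < r) :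
    V r = 2 * r * exp (-(2 * r)) / (1 - exp (-(2 * r))) - log (1 - exp (-(2 * r))) := by
  have hx := one_sub_exp_neg_pos (mul_pos two_pos hr)
  rw [V, abs_of_pos (sinh_pos_iff.mpr hr), sinh_eq_exp_mul_one_sub, cosh_eq_exp_mul_one_add,
    log_div (by positivity) two_ne_zero, log_mul (exp_pos r).ne' hx.ne', log_exp]
  generalize exp (-(2 * r)) = x at hx ⊢
  field_simp [hx.ne']
  ring

theorem exp_mul_V_div_eq {r : ℝ} (hr : 0 < r) :
    exp (2 * r) * V r / (2 * r) =
      (1 - exp (-(2 * r)))⁻¹ - log (1 - exp (-(2 * r))) / exp (-(2 * r)) / (2 * r) := by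
  have hx1 := (one_sub_exp_neg_pos (mul_pos two_pos hr)).ne'
  have hx0 := (exp_pos (-(2 * r))).ne'
  rw [V_eq_of_pos hr, show exp (2 * r) = (exp (-(2 * r)))⁻¹ by rw [← exp_neg, neg_neg]]
  generalize exp (-(2 * r)) = x at hx0 hx1 ⊢
  field_simp

theorem tendsto_V_add_log : Tendsto (fun r => V r + log r) (𝓝[>] 0) (𝓝 (1 - log 2)) := by
  have hsinh := tendsto_sinh_div_self.mono_left (nhdsGT_le_nhdsNE 0)
  have hcosh : Tendsto cosh (𝓝[>] 0) (𝓝 1) := by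
    simpa using (continuous_cosh.tendsto 0).mono_left nhdsWithin_le_nhds
  have hlog := (continuousAt_log one_ne_zero).tendsto.comp hsinh
  have := ((hcosh.div hsinh one_ne_zero).sub hlog).sub_const (log 2)
  rw [log_one, div_one, sub_zero] at this
  exact this.congr' (eventually_nhdsWithin_of_forall fun r hr => (V_add_log_eq hr).symm)

theorem tendsto_V_div_neg_log : Tendsto (fun r => V r / (-log r)) (𝓝[>] 0) (𝓝 1) := by
  have hlog : Tendsto (fun r => -log r) (𝓝[>] 0) atTop :=
    tendsto_neg_atBot_atTop.comp tendsto_log_nhdsGT_zero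
  have := (tendsto_V_add_log.div_atTop hlog).add_const 1
  rw [zero_add] at this
  refine this.congr' ?_
  filter_upwards [hlog.eventually_gt_atTop 0] with r hr
  field_simp [(neg_pos.mp hr).ne]
  ring

theorem tendsto_exp_mul_V_div : Tendsto (fun r => exp (2 * r) * V r / (2 * r)) atTop (𝓝 1) := by
  have h2r : Tendsto (fun r : ℝ => 2 * r) atTop atTop := tendsto_id.const_mul_atTop two_pos
  have hx : Tendsto (fun r => exp (-(2 * r))) atTop (𝓝[≠] 0) :=
    (tendsto_exp_atBot_nhdsGT.comp (tendsto_neg_atTop_atBot.comp h2r)).mono_right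
      (nhdsGT_le_nhdsNE 0)
  have hinv := ((tendsto_nhdsWithin_iff.mp hx).1.const_sub 1).inv₀ (by norm_num)
  have hquot := (tendsto_log_one_sub_div_self.comp hx).div_atTop h2r
  have := hinv.sub hquot
  simp only [sub_zero, inv_one, Function.comp_def] at this
  exact this.congr' (eventually_gt_atTop 0 |>.mono fun r hr => (exp_mul_V_div_eq hr).symm)

/-- **Asymptotics of `V`.**  At the origin `V` diverges logarithmically:
`V(r) + log r → 1 − log 2` (hence `V(r)/(−log r) → 1`) as `r ↓ 0`; at infinity `V`
decays exponentially: `e^{2r} V(r)/(2r) → 1` (i.e. `V(r) ~ 2r e^{−2r}`). -/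
theorem V_asymptotics :
    Tendsto (fun r : ℝ => V r + Real.log r) (𝓝[>] (0 : ℝ)) (𝓝 (1 - Real.log 2)) ∧
    Tendsto (fun r : ℝ => V r / (-Real.log r)) (𝓝[>] (0 : ℝ)) (𝓝 1) ∧
    Tendsto (fun r : ℝ => Real.exp (2 * r) * V r / (2 * r)) atTop (𝓝 1) :=
  ⟨tendsto_V_add_log, tendsto_V_div_neg_log, tendsto_exp_mul_V_div⟩

end
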